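/- Let M = D − A be an SDDM matrix, where D is a positive diagonal matrix and A is a nonnegative symmetric matrix. Then D − A D⁻¹ A is invertible and (D − A)⁻¹ = (1/2)·[D⁻¹ + (I + D⁻¹A)(D − A D⁻¹ A)⁻¹(I + A D⁻¹)]. -/

import Mathlib

/-!
`D - A D⁻¹ A = (D - A) D⁻¹ (D + A)`, and `D + A` is positive definite as soon as `D - A` is:
for `A ≥ 0` entrywise, `xᵀ (D + A) x ≥ |x|ᵀ (D - A) |x|`. Hence `D - A D⁻¹ A` is invertible, and
since `D - A D⁻¹ A = (D - A)(1 + D⁻¹ A)`, multiplying the right-hand side of the formula by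
`D - A` gives `½ ((1 - A D⁻¹) + (1 + A D⁻¹)) = 1`.
-/

open Matrix

/-- An `n × n` real symmetric matrix is SDDM if it is positive definite, has nonpositive
off-diagonal entries, and is diagonally dominant: `M i i ≥ ∑_{j ≠ i} |M i j|`. -/
def IsSDDM {n : ℕ} (M : Matrix (Fin n) (Fin n) ℝ) : Prop :=
  M.PosDef ∧ (∀ i j, i ≠ j → M i j ≤ 0) ∧
    ∀ i, ∑ j ∈ Finset.univ.erase i, |M i j| ≤ M i i

namespace Matrix

section Algebra

variable {ι K : Type*} [Fintype ι] [DecidableEq ι]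

theorem sub_mul_inv_mul_eq_sub_mul_inv_mul_add [CommRing K] {D : Matrix ι ι K}
    (hD : IsUnit D.det) (A : Matrix ι ι K) :
    D - A * D⁻¹ * A = (D - A) * D⁻¹ * (D + A) := by
  simp only [sub_mul, mul_add, one_mul, mul_assoc, mul_nonsing_inv D hD, nonsing_inv_mul D hD,
    mul_one]
  abel

theorem inv_sub_eq_half_smul [Field K] [NeZero (2 : K)] {D A : Matrix ι ι K}
    (hD : IsUnit D.det) (hN : IsUnit (D - A * D⁻¹ * A).det) :
    (D - A)⁻¹ = (1 / 2 : K) • (D⁻¹ +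
      (1 + D⁻¹ * A) * (D - A * D⁻¹ * A)⁻¹ * (1 + A * D⁻¹)) := by
  have hfactor : D - A * D⁻¹ * A = (D - A) * (1 + D⁻¹ * A) := by
    rw [sub_mul_inv_mul_eq_sub_mul_inv_mul_add hD, mul_assoc, mul_add, nonsing_inv_mul D hD]
  have hright : (D - A) * ((1 + D⁻¹ * A) * (D - A * D⁻¹ * A)⁻¹) = 1 := by
    rw [← mul_assoc, ← hfactor, mul_nonsing_inv _ hN]
  refine inv_eq_right_inv ?_
  calc (D - A) * ((1 / 2 : K) • (D⁻¹ + (1 + D⁻¹ * A) * (D - A * D⁻¹ * A)⁻¹ * (1 + A * D⁻¹)))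
      = (1 / 2 : K) • ((1 - A * D⁻¹) + (1 + A * D⁻¹)) := by
        rw [Matrix.mul_smul, mul_add, ← mul_assoc (D - A) _ (1 + A * D⁻¹), hright, one_mul,
          sub_mul, mul_nonsing_inv D hD]
    _ = 1 := by
        rw [sub_add_add_cancel, ← two_smul K (1 : Matrix ι ι K), smul_smul,
          one_div_mul_cancel two_ne_zero, one_smul]

end Algebra

section Order

variable {ι R : Type*} [Fintype ι]

theorem abs_dotProduct_mulVec_le_of_nonneg [CommRing R] [LinearOrder R] [IsStrictOrderedRing R]
    {A : Matrix ι ι R} (hA : ∀ i j, 0 ≤ A i j) (x : ι → R) :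
    |x ⬝ᵥ A *ᵥ x| ≤ |x| ⬝ᵥ A *ᵥ |x| := by
  simp only [dotProduct, mulVec, Finset.mul_sum, Pi.abs_apply]
  calc |∑ i, ∑ j, x i * (A i j * x j)|
      ≤ ∑ i, |∑ j, x i * (A i j * x j)| := Finset.abs_sum_le_sum_abs _ _
    _ ≤ ∑ i, ∑ j, |x i * (A i j * x j)| :=
        Finset.sum_le_sum fun i _ => Finset.abs_sum_le_sum_abs _ _
    _ = ∑ i, ∑ j, |x i| * (A i j * |x j|) := by
        simp only [abs_mul, abs_of_nonneg (hA _ _)]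

theorem dotProduct_diagonal_mulVec_abs [DecidableEq ι] [CommRing R] [LinearOrder R]
    [IsStrictOrderedRing R] (d x : ι → R) :
    |x| ⬝ᵥ diagonal d *ᵥ |x| = x ⬝ᵥ diagonal d *ᵥ x := by
  simp only [mulVec_diagonal, dotProduct, Pi.abs_apply]
  refine Finset.sum_congr rfl fun i _ => ?_
  rw [mul_left_comm, abs_mul_abs_self, mul_left_comm]

theorem PosDef.diagonal_add_of_diagonal_sub [DecidableEq ι] {d : ι → ℝ} {A : Matrix ι ι ℝ}
    (hA : A.IsSymm) (hA0 : ∀ i j, 0 ≤ A i j) (hM : (diagonal d - A).PosDef) :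
    (diagonal d + A).PosDef := by
  have hAh : A.IsHermitian := by
    rw [IsHermitian, conjTranspose_eq_transpose_of_trivial, hA]
  refine PosDef.of_dotProduct_mulVec_pos ((isHermitian_diagonal d).add hAh) fun x hx => ?_
  have habs : |x| ≠ 0 := fun h => hx (funext fun i => by simpa using congrFun h i)
  have hpos := hM.dotProduct_mulVec_pos habs
  simp only [star_trivial, sub_mulVec, add_mulVec, dotProduct_sub, dotProduct_add,
    dotProduct_diagonal_mulVec_abs] at hpos ⊢
  linarith [neg_abs_le (x ⬝ᵥ A *ᵥ x), abs_dotProduct_mulVec_le_of_nonneg hA0 x]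

end Order

end Matrix

/-- If `M = D − A` is SDDM with `D` positive diagonal and `A` nonnegative symmetric, then
`D − A D⁻¹ A` is invertible and
`(D − A)⁻¹ = (1/2) [D⁻¹ + (I + D⁻¹ A)(D − A D⁻¹ A)⁻¹(I + A D⁻¹)]`. -/
theorem inv_of_sddm_splitting {n : ℕ} (d : Fin n → ℝ) (hd : ∀ i, 0 < d i)
    (A : Matrix (Fin n) (Fin n) ℝ) (hA : A.IsSymm) (hA0 : ∀ i j, 0 ≤ A i j)
    (hM : IsSDDM (Matrix.diagonal d - A)) :
    IsUnit (Matrix.diagonal d - A * (Matrix.diagonal d)⁻¹ * A) ∧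
    (Matrix.diagonal d - A)⁻¹ =
      (1 / 2 : ℝ) • ((Matrix.diagonal d)⁻¹ +
        (1 + (Matrix.diagonal d)⁻¹ * A) *
          (Matrix.diagonal d - A * (Matrix.diagonal d)⁻¹ * A)⁻¹ *
            (1 + A * (Matrix.diagonal d)⁻¹)) := by
  have hD : IsUnit (diagonal d).det := by
    rw [det_diagonal, isUnit_iff_ne_zero, Finset.prod_ne_zero_iff]
    exact fun i _ => (hd i).ne'
  have hN : IsUnit (diagonal d - A * (diagonal d)⁻¹ * A).det := by
    rw [sub_mul_inv_mul_eq_sub_mul_inv_mul_add hD, det_mul, det_mul]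
    exact (hM.1.det_pos.ne'.isUnit.mul (isUnit_nonsing_inv_det _ hD)).mul
      (hM.1.diagonal_add_of_diagonal_sub hA hA0).det_pos.ne'.isUnit
  exact ⟨(isUnit_iff_isUnit_det _).mpr hN, inv_sub_eq_half_smul hD hN⟩
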